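/- Let X and Y be Banach spaces over ℂ and let (S,T) be a regular Fredholm pair, S : X → Y, T : Y → X, with ind(S,T) = 0 (i.e., (S,T) is a regular Weyl pair). Then S and T are decomposably regular: there exist bounded linear bijections S' : Y → X and T' : X → Y (with bounded inverses) such that S = S S' S and T = T T' T. -/

import Mathlib

/-!
A generalized inverse `S''` of `S` (`S S'' S = S`) makes `S'' S` and `S S''` continuous
idempotents, so `X = R(S''S) ⊕ N(S)` and `Y = R(S) ⊕ N(SS'')` topologically, and `S` maps
`R(S''S)` isomorphically onto `R(S)`. Gluing the inverse of that map with any isomorphism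
`N(SS'') ≃ N(S)` gives an invertible generalized inverse, so it suffices to show `N(S) ≅ N(SS'')`.

Let `a, b, c, d` be the four dimensions of the Fredholm pair. Splitting off `N(S) ∩ R(T)` gives
`N(S) × ℂ^d ≅ R(T) × ℂ^c`, because `a + d = b + c` when the index vanishes. With
`G = N(T) ∩ R(S)`, both `G' ⊕ R(T''T)` and `G'' ⊕ N(SS'')` are closed complements of `G` in `Y`,
where `G'`, `G''` (of dimensions `c`, `d`) complement `G` in `N(T)` and in `R(S)`; since
`R(T''T) ≅ R(T)`, this gives `R(T) × ℂ^c ≅ N(SS'') × ℂ^d`. Finally `ℂ^d` cancels one dimension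
at a time: two closed hyperplanes with a common complementary line are isomorphic, and the
kernels of any two nonzero functionals have one. The same argument applied to `(T, S)` handles `T`.
-/

open Module

/-- The space `A / (A ∩ B)` for submodules `A B` of a module, realized as the quotient of `A`
by the preimage of `B` under the inclusion of `A`. -/
abbrev relQuot {X : Type*} [AddCommGroup X] [Module ℂ X] (A B : Submodule ℂ X) : Type _ :=
  ↥A ⧸ (B.comap A.subtype)

/-- The dimension of `A / (A ∩ B)`. -/
noncomputable def relDim {X : Type*} [AddCommGroup X] [Module ℂ X] (A B : Submodule ℂ X) : ℕ :=
  finrank ℂ (relQuot A B)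

/-- `(S, T)` is a Fredholm pair: the four quotients `N(S)/(N(S) ∩ R(T))`,
`R(T)/(N(S) ∩ R(T))`, `N(T)/(N(T) ∩ R(S))` and `R(S)/(N(T) ∩ R(S))` are all
finite dimensional. -/
def IsFredholmPair {X Y : Type*} [SeminormedAddCommGroup X] [NormedSpace ℂ X]
    [SeminormedAddCommGroup Y] [NormedSpace ℂ Y] (S : X →L[ℂ] Y) (T : Y →L[ℂ] X) : Prop :=
  FiniteDimensional ℂ (relQuot (LinearMap.ker (S : X →ₗ[ℂ] Y)) (LinearMap.range (T : Y →ₗ[ℂ] X))) ∧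
  FiniteDimensional ℂ (relQuot (LinearMap.range (T : Y →ₗ[ℂ] X)) (LinearMap.ker (S : X →ₗ[ℂ] Y))) ∧
  FiniteDimensional ℂ (relQuot (LinearMap.ker (T : Y →ₗ[ℂ] X)) (LinearMap.range (S : X →ₗ[ℂ] Y))) ∧
  FiniteDimensional ℂ (relQuot (LinearMap.range (S : X →ₗ[ℂ] Y)) (LinearMap.ker (T : Y →ₗ[ℂ] X)))

/-- The index of a Fredholm pair: `ind (S,T) = a - b - c + d`. -/
noncomputable def fpIndex {X Y : Type*} [SeminormedAddCommGroup X] [NormedSpace ℂ X]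
    [SeminormedAddCommGroup Y] [NormedSpace ℂ Y] (S : X →L[ℂ] Y) (T : Y →L[ℂ] X) : ℤ :=
  (relDim (LinearMap.ker (S : X →ₗ[ℂ] Y)) (LinearMap.range (T : Y →ₗ[ℂ] X)) : ℤ)
    - (relDim (LinearMap.range (T : Y →ₗ[ℂ] X)) (LinearMap.ker (S : X →ₗ[ℂ] Y)) : ℤ)
    - (relDim (LinearMap.ker (T : Y →ₗ[ℂ] X)) (LinearMap.range (S : X →ₗ[ℂ] Y)) : ℤ)
    + (relDim (LinearMap.range (S : X →ₗ[ℂ] Y)) (LinearMap.ker (T : Y →ₗ[ℂ] X)) : ℤ)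


/-- A bounded operator `S` is regular if it has a generalized inverse `S'`
with `S = S ∘ S' ∘ S`. -/
def IsRegularOp {X Y : Type*} [SeminormedAddCommGroup X] [NormedSpace ℂ X]
    [SeminormedAddCommGroup Y] [NormedSpace ℂ Y] (S : X →L[ℂ] Y) : Prop :=
  ∃ S' : Y →L[ℂ] X, S.comp (S'.comp S) = S

namespace Submodule

theorem IsTopCompl.nonempty_equiv {R M : Type*} [Ring R] [TopologicalSpace M] [AddCommGroup M]
    [IsTopologicalAddGroup M] [Module R M] {p q₁ q₂ : Submodule R M} (h₁ : IsTopCompl p q₁)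
    (h₂ : IsTopCompl p q₂) : Nonempty (q₁ ≃L[R] q₂) :=
  ⟨(quotientEquivOfIsTopCompl p q₁ h₁).symm.trans (quotientEquivOfIsTopCompl p q₂ h₂)⟩

end Submodule

theorem exists_apply_ne_zero_and_apply_ne_zero {M N₁ N₂ F G : Type*} [AddZeroClass M]
    [AddZeroClass N₁] [AddZeroClass N₂] [FunLike F M N₁] [AddMonoidHomClass F M N₁]
    [FunLike G M N₂] [AddMonoidHomClass G M N₂] {f : F} {g : G} {a b : M} (ha : f a ≠ 0)
    (hb : g b ≠ 0) : ∃ c, f c ≠ 0 ∧ g c ≠ 0 := by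
  by_cases hga : g a = 0
  · by_cases hfb : f b = 0
    · exact ⟨a + b, by simpa [hfb] using ha, by simpa [hga] using hb⟩
    · exact ⟨b, hfb, hb⟩
  · exact ⟨a, ha, hga⟩

def ContinuousLinearMap.kerSndEquiv (R M N : Type*) [Semiring R] [AddCommMonoid M] [Module R M]
    [TopologicalSpace M] [AddCommMonoid N] [Module R N] [TopologicalSpace N] :
    (snd R M N).ker ≃L[R] M :=
  .equivOfInverse ((fst R M N).comp ((snd R M N).ker).subtypeL)
    ((inl R M N).codRestrict _ fun _ ↦ rfl) (fun x ↦ Subtype.ext (Prod.ext rfl x.2.symm))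
    fun _ ↦ rfl

section Cancellation

variable {𝕜 : Type*} [NontriviallyNormedField 𝕜] [CompleteSpace 𝕜]

namespace ContinuousLinearMap

variable {E : Type*} [NormedAddCommGroup E] [NormedSpace 𝕜 E]

theorem isTopCompl_span_singleton_ker {f : E →L[𝕜] 𝕜} {c : E} (hc : f c ≠ 0) :
    Submodule.IsTopCompl (𝕜 ∙ c) f.ker := by
  have hsurj : Function.Surjective f := fun t ↦ ⟨(t / f c) • c, by simp [hc]⟩
  have hcompl : IsCompl f.ker (𝕜 ∙ c) :=
    Submodule.isCompl_span_singleton_of_isCoatom_of_notMem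
      (LinearMap.isCoatom_ker_of_surjective hsurj) hc
  exact (Submodule.IsCompl.isTopCompl_of_isClosed_of_finiteDimensional hcompl f.isClosed_ker).symm

theorem nonempty_ker_equiv_ker {f g : E →L[𝕜] 𝕜} (hf : f ≠ 0) (hg : g ≠ 0) :
    Nonempty (f.ker ≃L[𝕜] g.ker) := by
  obtain ⟨a, ha⟩ := DFunLike.ne_iff.mp hf
  obtain ⟨b, hb⟩ := DFunLike.ne_iff.mp hg
  obtain ⟨c, hfc, hgc⟩ := exists_apply_ne_zero_and_apply_ne_zero ha hb
  exact (isTopCompl_span_singleton_ker hfc).nonempty_equiv (isTopCompl_span_singleton_ker hgc)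

end ContinuousLinearMap

open ContinuousLinearMap in
theorem nonempty_equiv_of_prod_equiv_prod_field {U V : Type*} [NormedAddCommGroup U]
    [NormedSpace 𝕜 U] [NormedAddCommGroup V] [NormedSpace 𝕜 V] (e : (U × 𝕜) ≃L[𝕜] (V × 𝕜)) :
    Nonempty (U ≃L[𝕜] V) := by
  have hU : snd 𝕜 U 𝕜 ≠ 0 := fun h ↦ by simpa using congr(($h) (0, 1))
  have hV : snd 𝕜 V 𝕜 ∘L (e : (U × 𝕜) →L[𝕜] V × 𝕜) ≠ 0 := fun h ↦ by
    simpa using congr(($h) (e.symm (0, 1)))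
  obtain ⟨φ⟩ := nonempty_ker_equiv_ker hU hV
  exact ⟨(kerSndEquiv 𝕜 U 𝕜).symm.trans <| φ.trans <|
    (ContinuousLinearEquiv.ofEq _ _ (LinearMap.ker_comp _ _)).trans <|
      (e.ofSubmodule' _).trans (kerSndEquiv 𝕜 V 𝕜)⟩

theorem nonempty_equiv_of_prod_equiv_prod_pi (n : ℕ) {U V : Type*} [NormedAddCommGroup U]
    [NormedSpace 𝕜 U] [NormedAddCommGroup V] [NormedSpace 𝕜 V]
    (e : (U × (Fin n → 𝕜)) ≃L[𝕜] (V × (Fin n → 𝕜))) : Nonempty (U ≃L[𝕜] V) := by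
  induction n generalizing U V with
  | zero =>
    exact ⟨(ContinuousLinearEquiv.prodUnique 𝕜 U _).symm.trans
      (e.trans (ContinuousLinearEquiv.prodUnique 𝕜 V _))⟩
  | succ n ih =>
    let ι : ((Fin n → 𝕜) × 𝕜) ≃L[𝕜] (Fin (n + 1) → 𝕜) := .ofFinrankEq (by simp)
    let αU : ((U × (Fin n → 𝕜)) × 𝕜) ≃L[𝕜] (U × (Fin (n + 1) → 𝕜)) :=
      (ContinuousLinearEquiv.prodAssoc 𝕜 U _ 𝕜).trans ((ContinuousLinearEquiv.refl 𝕜 U).prodCongr ι)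
    let αV : ((V × (Fin n → 𝕜)) × 𝕜) ≃L[𝕜] (V × (Fin (n + 1) → 𝕜)) :=
      (ContinuousLinearEquiv.prodAssoc 𝕜 V _ 𝕜).trans ((ContinuousLinearEquiv.refl 𝕜 V).prodCongr ι)
    obtain ⟨e'⟩ := nonempty_equiv_of_prod_equiv_prod_field (αU.trans (e.trans αV.symm))
    exact ih e'

theorem nonempty_equiv_of_prod_equiv_prod_finiteDimensional {U V W : Type*} [NormedAddCommGroup U]
    [NormedSpace 𝕜 U] [NormedAddCommGroup V] [NormedSpace 𝕜 V] [NormedAddCommGroup W]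
    [NormedSpace 𝕜 W] [FiniteDimensional 𝕜 W] (e : (U × W) ≃L[𝕜] (V × W)) :
    Nonempty (U ≃L[𝕜] V) :=
  let ι : W ≃L[𝕜] (Fin (finrank 𝕜 W) → 𝕜) := .ofFinrankEq (by simp)
  nonempty_equiv_of_prod_equiv_prod_pi _ <|
    ((ContinuousLinearEquiv.refl 𝕜 U).prodCongr ι).symm.trans <|
      e.trans ((ContinuousLinearEquiv.refl 𝕜 V).prodCongr ι)

end Cancellation

theorem Submodule.nonempty_prod_equiv_of_sup_eq {𝕜 E : Type*} [NontriviallyNormedField 𝕜]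
    [CompleteSpace 𝕜] [NormedAddCommGroup E] [NormedSpace 𝕜 E] [CompleteSpace E]
    {p q A : Submodule 𝕜 E} (hp : IsClosed (p : Set E)) [FiniteDimensional 𝕜 q]
    (hpq : Disjoint p q) (hA : p ⊔ q = A) : Nonempty ((p × q) ≃L[𝕜] A) := by
  have : CompleteSpace p := hp.completeSpace_coe
  have : CompleteSpace q := FiniteDimensional.complete 𝕜 q
  let f := p.subtypeL.coprod q.subtypeL
  have hrange : f.range = A := by
    simp [f, ContinuousLinearMap.coe_coprod, LinearMap.range_coprod, hA]
  have hinj : Function.Injective f := by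
    refine LinearMap.ker_eq_bot.mp ?_
    simpa [f] using ContinuousLinearMap.ker_coprod_of_disjoint_range (f₁ := p.subtypeL)
      (f₂ := q.subtypeL) (by simpa using hpq)
  have hclosed : IsClosed (Set.range f) := by
    change IsClosed (Set.range (f : p × q →ₗ[𝕜] E))
    rw [← LinearMap.coe_range, hrange, ← hA]
    exact p.isClosed_sup_finiteDimensional q hp
  exact ⟨(f.equivRange hinj hclosed).trans (.ofEq _ _ hrange)⟩

theorem Submodule.exists_disjoint_sup_eq_finrank_eq_relDim {W : Type*} [AddCommGroup W]
    [Module ℂ W] (A p : Submodule ℂ W) [FiniteDimensional ℂ (relQuot A p)] :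
    ∃ q : Submodule ℂ W, Disjoint (A ⊓ p) q ∧ A ⊓ p ⊔ q = A ∧ FiniteDimensional ℂ q ∧
      finrank ℂ q = relDim A p := by
  obtain ⟨q, hq⟩ := (p.comap A.subtype).exists_isCompl
  let e : q.map A.subtype ≃ₗ[ℂ] relQuot A p :=
    (q.equivMapOfInjective _ A.injective_subtype).symm.trans (quotientEquivOfIsCompl _ q hq).symm
  refine ⟨q.map A.subtype, ?_, ?_, e.symm.finiteDimensional, e.finrank_eq⟩
  · rw [← map_comap_subtype]
    exact disjoint_map A.injective_subtype hq.disjoint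
  · rw [← map_comap_subtype, ← map_sup, hq.sup_eq_top, map_subtype_top]

section StableEquiv

variable {E U V : Type*} [NormedAddCommGroup E] [NormedSpace ℂ E] [CompleteSpace E]
  [NormedAddCommGroup U] [NormedSpace ℂ U] [FiniteDimensional ℂ U]
  [NormedAddCommGroup V] [NormedSpace ℂ V] [FiniteDimensional ℂ V]

theorem Submodule.nonempty_prod_equiv_prod_of_relDim {A p : Submodule ℂ E}
    (hA : IsClosed (A : Set E)) (hp : IsClosed (p : Set E)) [FiniteDimensional ℂ (relQuot A p)]
    [FiniteDimensional ℂ (relQuot p A)]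
    (h : relDim A p + finrank ℂ U = relDim p A + finrank ℂ V) :
    Nonempty ((A × U) ≃L[ℂ] (p × V)) := by
  obtain ⟨F₁, hd₁, hs₁, _, hr₁⟩ := exists_disjoint_sup_eq_finrank_eq_relDim A p
  obtain ⟨F₂, hd₂, hs₂, _, hr₂⟩ := exists_disjoint_sup_eq_finrank_eq_relDim p A
  rw [inf_comm] at hd₂ hs₂
  obtain ⟨e₁⟩ := nonempty_prod_equiv_of_sup_eq (hA.inter hp) hd₁ hs₁
  obtain ⟨e₂⟩ := nonempty_prod_equiv_of_sup_eq (hA.inter hp) hd₂ hs₂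
  let e₃ : (F₁ × U) ≃L[ℂ] (F₂ × V) := .ofFinrankEq (by simp [finrank_prod, hr₁, hr₂, h])
  exact ⟨(e₁.symm.prodCongr (.refl ℂ U)).trans <| (ContinuousLinearEquiv.prodAssoc ℂ _ _ _).trans <|
    ((ContinuousLinearEquiv.refl ℂ _).prodCongr e₃).trans <|
      (ContinuousLinearEquiv.prodAssoc ℂ _ _ _).symm.trans (e₂.prodCongr (.refl ℂ V))⟩

theorem Submodule.nonempty_prod_equiv_prod_of_isTopCompl {K M R N : Submodule ℂ E}
    (hK : IsTopCompl M K) (hR : IsTopCompl R N) [FiniteDimensional ℂ (relQuot K R)]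
    [FiniteDimensional ℂ (relQuot R K)] (hU : finrank ℂ U = relDim K R)
    (hV : finrank ℂ V = relDim R K) : Nonempty ((M × U) ≃L[ℂ] (N × V)) := by
  obtain ⟨G₁, hd₁, hs₁, _, hr₁⟩ := exists_disjoint_sup_eq_finrank_eq_relDim K R
  obtain ⟨G₂, hd₂, hs₂, _, hr₂⟩ := exists_disjoint_sup_eq_finrank_eq_relDim R K
  rw [inf_comm] at hd₂ hs₂
  have hG : IsClosed ((K ⊓ R : Submodule ℂ E) : Set E) := hK.isClosed'.inter hR.isClosed
  have h₁ : IsTopCompl (K ⊓ R) (G₁ ⊔ M) :=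
    IsCompl.isTopCompl_of_isClosed
      (hd₁.isCompl_sup_right_of_isCompl_sup_left (by rw [hs₁]; exact hK.isCompl.symm)) hG
      (sup_comm M G₁ ▸ M.isClosed_sup_finiteDimensional G₁ hK.isClosed)
  have h₂ : IsTopCompl (K ⊓ R) (G₂ ⊔ N) :=
    IsCompl.isTopCompl_of_isClosed
      (hd₂.isCompl_sup_right_of_isCompl_sup_left (by rw [hs₂]; exact hR.isCompl)) hG
      (sup_comm N G₂ ▸ N.isClosed_sup_finiteDimensional G₂ hR.isClosed')
  obtain ⟨e⟩ := h₁.nonempty_equiv h₂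
  obtain ⟨e₁⟩ := nonempty_prod_equiv_of_sup_eq hK.isClosed
    (hK.isCompl.disjoint.mono_right (hs₁ ▸ le_sup_right)) (sup_comm M G₁)
  obtain ⟨e₂⟩ := nonempty_prod_equiv_of_sup_eq hR.isClosed'
    (hR.isCompl.symm.disjoint.mono_right (hs₂ ▸ le_sup_right)) (sup_comm N G₂)
  let eU : U ≃L[ℂ] G₁ := .ofFinrankEq (hU.trans hr₁.symm)
  let eV : V ≃L[ℂ] G₂ := .ofFinrankEq (hV.trans hr₂.symm)
  exact ⟨((ContinuousLinearEquiv.refl ℂ M).prodCongr eU).trans <| e₁.trans <| e.trans <|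
    e₂.symm.trans ((ContinuousLinearEquiv.refl ℂ N).prodCongr eV.symm)⟩

end StableEquiv

namespace ContinuousLinearMap

section Regular

variable {R E F : Type*} [Ring R] [AddCommGroup E] [Module R E] [TopologicalSpace E]
  [AddCommGroup F] [Module R F] [TopologicalSpace F] {S : E →L[R] F} {S' : F →L[R] E}

theorem apply_apply_apply_of_comp_comp_eq (hS : S.comp (S'.comp S) = S) (x : E) :
    S (S' (S x)) = S x :=
  congr($hS x)

theorem isIdempotentElem_comp_left (hS : S.comp (S'.comp S) = S) :
    IsIdempotentElem (S'.comp S) := by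
  ext x
  simp [apply_apply_apply_of_comp_comp_eq hS]

theorem isIdempotentElem_comp_right (hS : S.comp (S'.comp S) = S) :
    IsIdempotentElem (S.comp S') := by
  ext y
  simp [apply_apply_apply_of_comp_comp_eq hS]

theorem ker_comp_eq_of_comp_comp_eq (hS : S.comp (S'.comp S) = S) : (S'.comp S).ker = S.ker :=
  le_antisymm (fun x (hx : S' (S x) = 0) ↦ by
      change S x = 0
      rw [← apply_apply_apply_of_comp_comp_eq hS, hx, map_zero])
    (fun x hx ↦ by simp_all)

theorem range_comp_eq_of_comp_comp_eq (hS : S.comp (S'.comp S) = S) :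
    (S.comp S').range = S.range :=
  le_antisymm (LinearMap.range_comp_le_range _ _) fun _ ⟨x, hx⟩ ↦
    ⟨S x, by simpa [← hx] using apply_apply_apply_of_comp_comp_eq hS x⟩

theorem isTopCompl_range_comp_ker (hS : S.comp (S'.comp S) = S) :
    Submodule.IsTopCompl (S'.comp S).range S.ker :=
  ker_comp_eq_of_comp_comp_eq hS ▸ IsIdempotentElem.isTopCompl (isIdempotentElem_comp_left hS)

theorem isTopCompl_range_ker_comp (hS : S.comp (S'.comp S) = S) :
    Submodule.IsTopCompl S.range (S.comp S').ker :=
  range_comp_eq_of_comp_comp_eq hS ▸ IsIdempotentElem.isTopCompl (isIdempotentElem_comp_right hS)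

def rangeCompEquivRange (hS : S.comp (S'.comp S) = S) : (S'.comp S).range ≃L[R] S.range :=
  .equivOfInverse ((S.comp (S'.comp S).range.subtypeL).codRestrict _ fun x ↦ ⟨x, rfl⟩)
    ((S'.comp S.range.subtypeL).codRestrict _ fun ⟨_, x, hx⟩ ↦ ⟨x, by simp [← hx]⟩)
    (fun ⟨_, x, hx⟩ ↦ by
      subst hx
      exact Subtype.ext congr(S' $(apply_apply_apply_of_comp_comp_eq hS x)))
    (fun ⟨_, x, hx⟩ ↦ by
      subst hx
      exact Subtype.ext (apply_apply_apply_of_comp_comp_eq hS x))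

theorem exists_equiv_comp_comp_eq_self [IsTopologicalAddGroup E] [IsTopologicalAddGroup F]
    (hS : S.comp (S'.comp S) = S) {C : Submodule R F} (hC : Submodule.IsTopCompl S.range C)
    (e : C ≃L[R] S.ker) : ∃ W : F ≃L[R] E, S.comp ((W : F →L[R] E).comp S) = S := by
  refine ⟨(Submodule.prodEquivOfIsTopCompl _ _ hC).symm.trans <|
    ((rangeCompEquivRange hS).symm.prodCongr e).trans <|
      Submodule.prodEquivOfIsTopCompl _ _ (isTopCompl_range_comp_ker hS), ?_⟩
  ext x
  have hx : (Submodule.prodEquivOfIsTopCompl _ _ hC).symm (S x) = (⟨S x, x, rfl⟩, 0) := by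
    rw [ContinuousLinearEquiv.symm_apply_eq]
    simp [Submodule.prodEquivOfIsTopCompl_apply]
  simp only [coe_comp, ContinuousLinearEquiv.coe_coe, Function.comp_apply,
    ContinuousLinearEquiv.trans_apply, hx]
  change S (S' (S x) + (e 0 : E)) = S x
  simp [apply_apply_apply_of_comp_comp_eq hS]

end Regular

end ContinuousLinearMap

theorem IsFredholmPair.symm {X Y : Type*} [SeminormedAddCommGroup X] [NormedSpace ℂ X]
    [SeminormedAddCommGroup Y] [NormedSpace ℂ Y] {S : X →L[ℂ] Y} {T : Y →L[ℂ] X}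
    (h : IsFredholmPair S T) : IsFredholmPair T S :=
  ⟨h.2.2.1, h.2.2.2, h.1, h.2.1⟩

theorem fpIndex_swap {X Y : Type*} [SeminormedAddCommGroup X] [NormedSpace ℂ X]
    [SeminormedAddCommGroup Y] [NormedSpace ℂ Y] (S : X →L[ℂ] Y) (T : Y →L[ℂ] X) :
    fpIndex T S = -fpIndex S T := by
  unfold fpIndex
  ring

open ContinuousLinearMap in
theorem IsFredholmPair.nonempty_ker_equiv_ker_comp {X Y : Type*} [NormedAddCommGroup X]
    [NormedSpace ℂ X] [CompleteSpace X] [NormedAddCommGroup Y] [NormedSpace ℂ Y] [CompleteSpace Y]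
    {S : X →L[ℂ] Y} {T : Y →L[ℂ] X} (h : IsFredholmPair S T) (hW : fpIndex S T = 0)
    {S'' : Y →L[ℂ] X} {T'' : X →L[ℂ] Y} (hS : S.comp (S''.comp S) = S)
    (hT : T.comp (T''.comp T) = T) : Nonempty (S.ker ≃L[ℂ] (S.comp S'').ker) := by
  obtain ⟨_, _, _, _⟩ := h
  have hidx : relDim S.ker T.range + relDim S.range T.ker
      = relDim T.range S.ker + relDim T.ker S.range := by
    unfold fpIndex at hW
    omega
  obtain ⟨e₁⟩ := Submodule.nonempty_prod_equiv_prod_of_relDim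
    (U := Fin (relDim S.range T.ker) → ℂ) (V := Fin (relDim T.ker S.range) → ℂ)
    S.isClosed_ker (isTopCompl_range_ker_comp hT).isClosed (by simpa using hidx)
  obtain ⟨e₂⟩ := Submodule.nonempty_prod_equiv_prod_of_isTopCompl
    (U := Fin (relDim T.ker S.range) → ℂ) (V := Fin (relDim S.range T.ker) → ℂ)
    (isTopCompl_range_comp_ker hT) (isTopCompl_range_ker_comp hS) (by simp) (by simp)
  exact nonempty_equiv_of_prod_equiv_prod_finiteDimensional <|
    e₁.trans <| ((rangeCompEquivRange hT).symm.prodCongr (.refl ℂ _)).trans e₂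

/-- A regular Weyl pair (regular Fredholm pair of index 0) consists of decomposably
regular operators: `S` and `T` admit invertible generalized inverses. -/
theorem regularWeylPair_decomposablyRegular {X Y : Type*}
    [NormedAddCommGroup X] [NormedSpace ℂ X] [CompleteSpace X]
    [NormedAddCommGroup Y] [NormedSpace ℂ Y] [CompleteSpace Y]
    (S : X →L[ℂ] Y) (T : Y →L[ℂ] X) (h : IsFredholmPair S T)
    (hS : IsRegularOp S) (hT : IsRegularOp T) (hW : fpIndex S T = 0) :
    ∃ (S' : Y ≃L[ℂ] X) (T' : X ≃L[ℂ] Y),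
      S.comp ((S' : Y →L[ℂ] X).comp S) = S ∧
      T.comp ((T' : X →L[ℂ] Y).comp T) = T := by
  obtain ⟨S'', hS''⟩ := hS
  obtain ⟨T'', hT''⟩ := hT
  obtain ⟨eS⟩ := h.nonempty_ker_equiv_ker_comp hW hS'' hT''
  obtain ⟨eT⟩ := h.symm.nonempty_ker_equiv_ker_comp (by rw [fpIndex_swap, hW, neg_zero]) hT'' hS''
  obtain ⟨S', hS'⟩ := ContinuousLinearMap.exists_equiv_comp_comp_eq_self hS''
    (ContinuousLinearMap.isTopCompl_range_ker_comp hS'') eS.symm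
  obtain ⟨T', hT'⟩ := ContinuousLinearMap.exists_equiv_comp_comp_eq_self hT''
    (ContinuousLinearMap.isTopCompl_range_ker_comp hT'') eT.symm
  exact ⟨S', T', hS', hT'⟩
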